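/- arXiv:2209.08374 — 3 statements merged into one kernel-verified Lean document; each statement's English description precedes it below -/
import Mathlib

section
/- Let m, n be natural numbers and let p, p' : Fin m → ℚ and q, q' : Fin n → ℚ all be nonincreasing (i.e. slope tuples of concave rationally tuplar polygons). If p ≥ p' and q ≥ q' in the Bruhat order, then p ⊕ q ≥ p' ⊕ q' in the Bruhat order, where ⊕ denotes the direct sum of rationally tuplar polygons. -/
open Finset

/-- Partial sum of the first `j` slopes of a rationally tuplar polygon. -/
def psum {n : ℕ} (s : Fin n → ℚ) (j : ℕ) : ℚ :=
  ∑ i : Fin n, if (i : ℕ) < j then s i else 0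

/-- Bruhat order: `s ≥ t`, i.e. all partial sums of `s` dominate those of `t`,
with equality of total sums. -/
def BruhatGE {n : ℕ} (s t : Fin n → ℚ) : Prop :=
  (∀ j : ℕ, 1 ≤ j → j ≤ n → psum t j ≤ psum s j) ∧ (∑ i, t i) = (∑ i, s i)

/-- `splus` is the concave rearrangement of `s`: a nonincreasing rearrangement. -/
def IsConcaveRearr {n : ℕ} (s splus : Fin n → ℚ) : Prop :=
  (∃ σ : Equiv.Perm (Fin n), splus = s ∘ σ) ∧ Antitone splus

/-- `u` is the direct sum `s ⊕ t`: the concave rearrangement of the concatenation. -/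
def IsDSum {m n : ℕ} (s : Fin m → ℚ) (t : Fin n → ℚ) (u : Fin (m + n) → ℚ) : Prop :=
  IsConcaveRearr (Fin.append s t) u

/-!
For a nonincreasing tuple `s`, `psum s k` is the largest sum of `k` entries of `s`. So the
`j`-th partial sum of `p ⊕ q` is the maximum of `psum p a + psum q b` over `a + b = j`: the
first `a` entries of `p` and the first `b` entries of `q` are `a + b` entries of `p ⊕ q`, and
conversely the first `j` entries of `p ⊕ q` are `a` entries of `p` and `b` entries of `q`
for some `a + b = j` (this direction needs `p` and `q` nonincreasing). Each term of the
maximum is monotone in the Bruhat order, and the total sums agree because `p ⊕ q` is a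
rearrangement of the concatenation.
-/

theorem Fin.val_le_val_of_strictMono {k n : ℕ} {f : Fin k → Fin n} (hf : StrictMono f)
    (i : Fin k) : (i : ℕ) ≤ f i :=
  calc (i : ℕ) = #(Iio i) := (Fin.card_Iio i).symm
    _ ≤ #(Iio (f i)) :=
      card_le_card_of_injOn f (fun _ hj => by simpa using hf (by simpa using hj))
        hf.injective.injOn
    _ = f i := Fin.card_Iio _

theorem Fin.sum_eq_sum_castAdd_add_sum_natAdd {M : Type*} [AddCommMonoid M] {m n : ℕ}
    (S : Finset (Fin (m + n))) (f : Fin (m + n) → M) :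
    ∑ i ∈ S, f i = ∑ i with Fin.castAdd n i ∈ S, f (Fin.castAdd n i)
      + ∑ i with Fin.natAdd m i ∈ S, f (Fin.natAdd m i) := by
  classical
  simp only [sum_filter, ← Fin.sum_univ_add (fun i => if i ∈ S then f i else 0), sum_ite_mem,
    univ_inter]

theorem Fin.card_eq_card_castAdd_add_card_natAdd {m n : ℕ} (S : Finset (Fin (m + n))) :
    #S = #{i | Fin.castAdd n i ∈ S} + #{i | Fin.natAdd m i ∈ S} := by
  simpa only [card_eq_sum_ones] using Fin.sum_eq_sum_castAdd_add_sum_natAdd S (fun _ => 1)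

theorem Fin.sum_append {M : Type*} [AddCommMonoid M] {m n : ℕ} (s : Fin m → M)
    (t : Fin n → M) :
    ∑ i, Fin.append s t i = ∑ i, s i + ∑ i, t i := by
  simp [Fin.sum_univ_add]

theorem psum_eq_sum_filter {n : ℕ} (s : Fin n → ℚ) (j : ℕ) :
    psum s j = ∑ i ∈ ({i | ↑i < j} : Finset (Fin n)), s i :=
  (sum_filter _ _).symm

theorem psum_eq_sum_castLE {n k : ℕ} (s : Fin n → ℚ) (h : k ≤ n) :
    psum s k = ∑ i : Fin k, s (Fin.castLE h i) := by
  have hfilter :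
      ({i | (i : ℕ) < k} : Finset (Fin n)) = univ.map (Fin.castLEEmb h) := by
    ext i
    simpa using ⟨fun hi => ⟨⟨i, hi⟩, rfl⟩, by rintro ⟨j, rfl⟩; exact j.2⟩
  rw [psum_eq_sum_filter, hfilter, sum_map]
  rfl

theorem BruhatGE.psum_le {n : ℕ} {s t : Fin n → ℚ} (h : BruhatGE s t) {j : ℕ}
    (hj : j ≤ n) :
    psum t j ≤ psum s j := by
  rcases Nat.eq_zero_or_pos j with rfl | hpos
  · simp [psum]
  · exact h.1 j hpos hj

theorem Antitone.sum_le_psum_card {n : ℕ} {s : Fin n → ℚ} (hs : Antitone s)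
    (A : Finset (Fin n)) :
    ∑ i ∈ A, s i ≤ psum s #A := by
  have hA : #A ≤ n := (card_le_univ A).trans_eq (Fintype.card_fin n)
  rw [← A.map_orderEmbOfFin_univ rfl, sum_map, card_map, card_univ, Fintype.card_fin,
    psum_eq_sum_castLE s hA]
  exact sum_le_sum fun i _ =>
    hs (Fin.le_def.2 (Fin.val_le_val_of_strictMono (A.orderEmbOfFin rfl).strictMono i))

theorem IsConcaveRearr.sum_le_psum_card {n : ℕ} {s u : Fin n → ℚ} (hu : IsConcaveRearr s u)
    (A : Finset (Fin n)) : ∑ i ∈ A, s i ≤ psum u #A := by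
  obtain ⟨⟨σ, rfl⟩, hanti⟩ := hu
  simpa [sum_map] using hanti.sum_le_psum_card (A.map σ.symm.toEmbedding)

theorem IsConcaveRearr.sum_eq {n : ℕ} {s u : Fin n → ℚ} (hu : IsConcaveRearr s u) :
    ∑ i, u i = ∑ i, s i := by
  obtain ⟨⟨σ, rfl⟩, -⟩ := hu
  exact Equiv.sum_comp σ s

theorem IsDSum.psum_add_psum_le {m n : ℕ} {s : Fin m → ℚ} {t : Fin n → ℚ}
    {u : Fin (m + n) → ℚ} (hu : IsDSum s t u) {a b : ℕ} (ha : a ≤ m) (hb : b ≤ n) :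
    psum s a + psum t b ≤ psum u (a + b) := by
  set S : Finset (Fin (m + n)) := {i | (i : ℕ) < a ∨ m ≤ i ∧ (i : ℕ) < m + b}
  have hleft :
      ({i | Fin.castAdd n i ∈ S} : Finset (Fin m)) = ({i | ↑i < a} : Finset (Fin m)) := by
    ext i; simp [S]
  have hright :
      ({i | Fin.natAdd m i ∈ S} : Finset (Fin n)) = ({i | ↑i < b} : Finset (Fin n)) := by
    ext i; simp [S]; omega
  have hS : #S = a + b := by
    rw [Fin.card_eq_card_castAdd_add_card_natAdd, hleft, hright, Fin.card_filter_val_lt,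
      Fin.card_filter_val_lt, min_eq_right ha, min_eq_right hb]
  calc psum s a + psum t b = ∑ i ∈ S, Fin.append s t i := by
        rw [Fin.sum_eq_sum_castAdd_add_sum_natAdd, hleft, hright, psum_eq_sum_filter,
          psum_eq_sum_filter]
        simp only [Fin.append_left, Fin.append_right]
    _ ≤ psum u (a + b) := hS ▸ hu.sum_le_psum_card S

theorem exists_psum_append_comp_perm_le {m n : ℕ} {s : Fin m → ℚ} {t : Fin n → ℚ}
    (hs : Antitone s) (ht : Antitone t) (τ : Equiv.Perm (Fin (m + n)))
    {j : ℕ} (hj : j ≤ m + n) :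
    ∃ a ≤ m, ∃ b ≤ n, a + b = j ∧
      psum (Fin.append s t ∘ τ) j ≤ psum s a + psum t b := by
  set T := ({i | (i : ℕ) < j} : Finset (Fin (m + n))).map τ.toEmbedding
  have hT : #T = j := by
    rw [card_map, Fin.card_filter_val_lt, min_eq_right hj]
  refine ⟨#{i | Fin.castAdd n i ∈ T}, card_le_univ _ |>.trans_eq (Fintype.card_fin m),
    #{i | Fin.natAdd m i ∈ T}, card_le_univ _ |>.trans_eq (Fintype.card_fin n),
    by rw [← Fin.card_eq_card_castAdd_add_card_natAdd, hT], ?_⟩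
  calc psum (Fin.append s t ∘ τ) j = ∑ i ∈ T, Fin.append s t i := by
        rw [psum_eq_sum_filter, sum_map]; rfl
    _ = _ := by
        rw [Fin.sum_eq_sum_castAdd_add_sum_natAdd]
        simp only [Fin.append_left, Fin.append_right]
    _ ≤ _ := add_le_add (hs.sum_le_psum_card _) (ht.sum_le_psum_card _)

theorem dsum_mono_bruhat_general {m n : ℕ} (p p' : Fin m → ℚ) (q q' : Fin n → ℚ)
    (hp' : Antitone p') (hq' : Antitone q')
    (h1 : BruhatGE p p') (h2 : BruhatGE q q')
    (u v : Fin (m + n) → ℚ) (hu : IsDSum p q u) (hv : IsDSum p' q' v) :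
    BruhatGE u v := by
  refine ⟨fun j _ hj => ?_, ?_⟩
  · obtain ⟨⟨τ, rfl⟩, -⟩ := hv
    obtain ⟨a, ha, b, hb, rfl, hle⟩ := exists_psum_append_comp_perm_le hp' hq' τ hj
    calc psum (Fin.append p' q' ∘ τ) (a + b) ≤ psum p' a + psum q' b := hle
      _ ≤ psum p a + psum q b := add_le_add (h1.psum_le ha) (h2.psum_le hb)
      _ ≤ psum u (a + b) := hu.psum_add_psum_le ha hb
  · rw [hu.sum_eq, hv.sum_eq, Fin.sum_append, Fin.sum_append, h1.2, h2.2]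

/-- Direct sums of concave rationally tuplar polygons preserve the Bruhat order. -/
theorem dsum_mono_bruhat {m n : ℕ} (p p' : Fin m → ℚ) (q q' : Fin n → ℚ)
    (hp : Antitone p) (hp' : Antitone p') (hq : Antitone q) (hq' : Antitone q')
    (h1 : BruhatGE p p') (h2 : BruhatGE q q')
    (u v : Fin (m + n) → ℚ) (hu : IsDSum p q u) (hv : IsDSum p' q' v) :
    BruhatGE u v :=
  dsum_mono_bruhat_general p p' q q' hp' hq' h1 h2 u v hu hv
end

section
/- Let m, n be natural numbers, let p, p' : Fin m → ℚ and q, q' : Fin n → ℚ with p ≥ p' and q ≥ q' in the Bruhat order. Let e : Fin m → Fin (m + n) and f : Fin n → Fin (m + n) be strictly monotone maps whose ranges are disjoint and together cover Fin (m + n). Define c, r : Fin (m + n) → ℚ by c (e i) = p' i and c (f i) = q' i, and r (e i) = p i and r (f i) = q i. Then r ≥ c in the Bruhat order. -/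
open Finset

lemma lower_iff {m : ℕ} (S : Finset (Fin m))
    (hS : ∀ i i' : Fin m, i ≤ i' → i' ∈ S → i ∈ S) (i : Fin m) :
    i ∈ S ↔ (i : ℕ) < S.card := by
  constructor
  · intro hi
    have h1 : Finset.Iic i ⊆ S := fun k hk => hS k i (by simpa using hk) hi
    have := Finset.card_le_card h1
    rw [Fin.card_Iic] at this
    omega
  · intro h
    by_contra hi
    have h1 : S ⊆ Finset.Iio i := by
      intro k hk
      simp only [Finset.mem_Iio]
      by_contra hk'
      exact hi (hS i k (le_of_not_gt hk') hk)
    have := Finset.card_le_card h1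
    rw [Fin.card_Iio] at this
    omega

lemma sum_strictMono {m N : ℕ} (e : Fin m → Fin N) (he : StrictMono e) (j : ℕ)
    (s : Fin m → ℚ) :
    (∑ i, if ((e i : ℕ)) < j then s i else 0)
      = psum s (Finset.univ.filter fun i : Fin m => ((e i : ℕ)) < j).card := by
  set S := Finset.univ.filter fun i : Fin m => ((e i : ℕ)) < j with hSdef
  have hS : ∀ i i' : Fin m, i ≤ i' → i' ∈ S → i ∈ S := by
    intro i i' hle hi'
    simp only [hSdef, mem_filter, mem_univ, true_and] at hi' ⊢
    exact lt_of_le_of_lt (by exact_mod_cast (he.monotone hle : e i ≤ e i')) hi'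
  unfold psum
  apply Finset.sum_congr rfl
  intro i _
  have h1 : ((e i : ℕ) < j) ↔ ((i : ℕ) < S.card) := by
    rw [← lower_iff S hS i]; simp [hSdef]
  rw [if_congr h1 rfl rfl]

lemma psum_split {m n : ℕ} (e : Fin m → Fin (m + n)) (f : Fin n → Fin (m + n))
    (he : Function.Injective e) (hf : Function.Injective f)
    (hdisj : ∀ i j, e i ≠ f j)
    (hcover : ∀ k : Fin (m + n), (∃ i, e i = k) ∨ (∃ j, f j = k))
    (r : Fin (m + n) → ℚ) (j : ℕ) :
    psum r j = (∑ i, if ((e i : ℕ)) < j then r (e i) else 0)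
      + (∑ i, if ((f i : ℕ)) < j then r (f i) else 0) := by
  have huniv : (Finset.univ : Finset (Fin (m + n)))
      = (Finset.univ.image e) ∪ (Finset.univ.image f) := by
    ext k
    simp only [mem_univ, true_iff, mem_union, mem_image]
    rcases hcover k with ⟨i, hi⟩ | ⟨i, hi⟩
    · exact Or.inl ⟨i, trivial, hi⟩
    · exact Or.inr ⟨i, trivial, hi⟩
  have hd : Disjoint (Finset.univ.image e) (Finset.univ.image f) := by
    rw [Finset.disjoint_left]
    rintro k hk hk'
    simp only [mem_image] at hk hk'
    obtain ⟨i, -, hi⟩ := hk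
    obtain ⟨i', -, hi'⟩ := hk'
    exact hdisj i i' (hi.trans hi'.symm)
  unfold psum
  rw [huniv, Finset.sum_union hd, Finset.sum_image (fun a _ b _ h => he h),
    Finset.sum_image (fun a _ b _ h => hf h)]

lemma card_filter_lt {N : ℕ} (j : ℕ) (hj : j ≤ N) :
    (Finset.univ.filter fun k : Fin N => (k : ℕ) < j).card = j := by
  conv_rhs => rw [← Finset.card_range j]
  refine Finset.card_bij (fun k _ => (k : ℕ)) ?_ ?_ ?_
  · intro k hk
    simp only [mem_filter] at hk
    simpa using hk.2
  · intro a ha b hb h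
    exact Fin.val_injective h
  · intro x hx
    simp only [Finset.mem_range] at hx
    exact ⟨⟨x, lt_of_lt_of_le hx hj⟩, by simp [hx], rfl⟩

lemma card_add {m n : ℕ} (e : Fin m → Fin (m + n)) (f : Fin n → Fin (m + n))
    (he : Function.Injective e) (hf : Function.Injective f)
    (hdisj : ∀ i j, e i ≠ f j)
    (hcover : ∀ k : Fin (m + n), (∃ i, e i = k) ∨ (∃ j, f j = k))
    (j : ℕ) (hj : j ≤ m + n) :
    (Finset.univ.filter fun i : Fin m => ((e i : ℕ)) < j).card
      + (Finset.univ.filter fun i : Fin n => ((f i : ℕ)) < j).card = j := by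
  have key : (Finset.univ.filter fun k : Fin (m + n) => (k : ℕ) < j)
      = ((Finset.univ.filter fun i : Fin m => ((e i : ℕ)) < j).image e)
        ∪ ((Finset.univ.filter fun i : Fin n => ((f i : ℕ)) < j).image f) := by
    ext k
    simp only [mem_filter, mem_union, mem_image, mem_univ, true_and]
    constructor
    · intro hk
      rcases hcover k with ⟨i, hi⟩ | ⟨i, hi⟩
      · exact Or.inl ⟨i, by rw [hi]; exact hk, hi⟩
      · exact Or.inr ⟨i, by rw [hi]; exact hk, hi⟩
    · rintro (⟨i, hi, rfl⟩ | ⟨i, hi, rfl⟩) <;> exact hi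
  have hd : Disjoint ((Finset.univ.filter fun i : Fin m => ((e i : ℕ)) < j).image e)
      ((Finset.univ.filter fun i : Fin n => ((f i : ℕ)) < j).image f) := by
    rw [Finset.disjoint_left]
    rintro k hk hk'
    simp only [mem_image] at hk hk'
    obtain ⟨i, -, hi⟩ := hk
    obtain ⟨i', -, hi'⟩ := hk'
    exact hdisj i i' (hi.trans hi'.symm)
  have := card_filter_lt (N := m + n) j hj
  rw [key, Finset.card_union_of_disjoint hd,
    Finset.card_image_of_injective _ he, Finset.card_image_of_injective _ hf] at this
  exact this

lemma psum_zero {n : ℕ} (s : Fin n → ℚ) : psum s 0 = 0 := by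
  simp [psum]

lemma psum_all {n : ℕ} (s : Fin n → ℚ) : psum s n = ∑ i, s i := by
  unfold psum
  apply Finset.sum_congr rfl
  intro i _
  simp [i.is_lt]

/-- Interleaving step: placing the slopes of `p` and `q` in order on the same
index sets on which `c` carries the slopes of `p'` and `q'` yields a tuple
dominating `c` in the Bruhat order. -/
theorem interleave_bruhatGE {m n : ℕ} (p p' : Fin m → ℚ) (q q' : Fin n → ℚ)
    (h1 : BruhatGE p p') (h2 : BruhatGE q q')
    (e : Fin m → Fin (m + n)) (f : Fin n → Fin (m + n))
    (he : StrictMono e) (hf : StrictMono f)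
    (hdisj : ∀ i j, e i ≠ f j)
    (hcover : ∀ k : Fin (m + n), (∃ i, e i = k) ∨ (∃ j, f j = k))
    (c r : Fin (m + n) → ℚ)
    (hce : ∀ i, c (e i) = p' i) (hcf : ∀ j, c (f j) = q' j)
    (hre : ∀ i, r (e i) = p i) (hrf : ∀ j, r (f j) = q j) :
    BruhatGE r c := by
  have hei := he.injective
  have hfi := hf.injective
  -- key decomposition
  have keyr : ∀ j : ℕ, psum r j
      = psum p (Finset.univ.filter fun i : Fin m => ((e i : ℕ)) < j).card
        + psum q (Finset.univ.filter fun i : Fin n => ((f i : ℕ)) < j).card := by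
    intro j
    rw [psum_split e f hei hfi hdisj hcover r j]
    rw [show (∑ i, if ((e i : ℕ)) < j then r (e i) else 0)
        = ∑ i, if ((e i : ℕ)) < j then p i else 0 from
      Finset.sum_congr rfl fun i _ => by rw [hre i]]
    rw [show (∑ i, if ((f i : ℕ)) < j then r (f i) else 0)
        = ∑ i, if ((f i : ℕ)) < j then q i else 0 from
      Finset.sum_congr rfl fun i _ => by rw [hrf i]]
    rw [sum_strictMono e he j p, sum_strictMono f hf j q]
  have keyc : ∀ j : ℕ, psum c j
      = psum p' (Finset.univ.filter fun i : Fin m => ((e i : ℕ)) < j).card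
        + psum q' (Finset.univ.filter fun i : Fin n => ((f i : ℕ)) < j).card := by
    intro j
    rw [psum_split e f hei hfi hdisj hcover c j]
    rw [show (∑ i, if ((e i : ℕ)) < j then c (e i) else 0)
        = ∑ i, if ((e i : ℕ)) < j then p' i else 0 from
      Finset.sum_congr rfl fun i _ => by rw [hce i]]
    rw [show (∑ i, if ((f i : ℕ)) < j then c (f i) else 0)
        = ∑ i, if ((f i : ℕ)) < j then q' i else 0 from
      Finset.sum_congr rfl fun i _ => by rw [hcf i]]
    rw [sum_strictMono e he j p', sum_strictMono f hf j q']
  have hpart : ∀ s : Fin m → Fin m → Prop, True := fun _ => trivial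
  constructor
  · intro j hj1 hj2
    rw [keyr j, keyc j]
    set a := (Finset.univ.filter fun i : Fin m => ((e i : ℕ)) < j).card with ha
    set b := (Finset.univ.filter fun i : Fin n => ((f i : ℕ)) < j).card with hb
    have ham : a ≤ m := le_trans (Finset.card_filter_le _ _) (by simp)
    have hbn : b ≤ n := le_trans (Finset.card_filter_le _ _) (by simp)
    have h1' : psum p' a ≤ psum p a := by
      rcases Nat.eq_zero_or_pos a with h | h
      · rw [h, psum_zero, psum_zero]
      · exact h1.1 a h ham
    have h2' : psum q' b ≤ psum q b := by
      rcases Nat.eq_zero_or_pos b with h | h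
      · rw [h, psum_zero, psum_zero]
      · exact h2.1 b h hbn
    linarith
  · have hmn := card_add e f hei hfi hdisj hcover (m + n) le_rfl
    have ham : (Finset.univ.filter fun i : Fin m => ((e i : ℕ)) < m + n).card ≤ m :=
      le_trans (Finset.card_filter_le _ _) (by simp)
    have hbn : (Finset.univ.filter fun i : Fin n => ((f i : ℕ)) < m + n).card ≤ n :=
      le_trans (Finset.card_filter_le _ _) (by simp)
    have heq1 : (Finset.univ.filter fun i : Fin m => ((e i : ℕ)) < m + n).card = m := by omega
    have heq2 : (Finset.univ.filter fun i : Fin n => ((f i : ℕ)) < m + n).card = n := by omega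
    have h3 := keyc (m + n)
    have h4 := keyr (m + n)
    rw [heq1, heq2, psum_all, psum_all, psum_all] at h3 h4
    rw [h3, h4, h1.2, h2.2]
end

section
/- Let m, n be natural numbers, and let p, p' : Fin m → ℚ and q, q' : Fin n → ℚ be arbitrary slope tuples of rationally tuplar polygons. Then (p ⊕ q) + (p' ⊕ q') ≥ (p + p') ⊕ (q + q') in the Bruhat order, where + denotes the pointwise (slopewise) sum of two tuples of the same length and ⊕ denotes the direct sum of rationally tuplar polygons. -/
open Finset

lemma psum_eq_filter {n : ℕ} (s : Fin n → ℚ) (j : ℕ) :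
    psum s j = ∑ i ∈ univ.filter (fun i : Fin n => (i : ℕ) < j), s i :=
  (Finset.sum_filter _ _).symm

lemma fin_strictMono_le {j n : ℕ} {g : Fin j → Fin n} (hg : StrictMono g) :
    ∀ k : Fin j, (k : ℕ) ≤ (g k : ℕ) := by
  intro k
  obtain ⟨a, ha⟩ := k
  induction a with
  | zero => exact Nat.zero_le _
  | succ a ih =>
    have h1 : g ⟨a, Nat.lt_of_succ_lt ha⟩ < g ⟨a + 1, ha⟩ := by
      apply hg; simp [Fin.lt_def]
    have h2 := ih (Nat.lt_of_succ_lt ha)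
    rw [Fin.lt_def] at h1
    simp only [Fin.val_mk] at h1 h2 ⊢
    omega

lemma filter_lt_eq_map {n j : ℕ} (hj : j ≤ n) :
    univ.filter (fun i : Fin n => (i : ℕ) < j) =
      (univ : Finset (Fin j)).map (Fin.castLEEmb hj) := by
  ext i
  simp only [mem_filter, mem_univ, true_and, Finset.mem_map]
  constructor
  · intro h
    exact ⟨⟨(i : ℕ), h⟩, by simp [Fin.castLEEmb, Fin.ext_iff]⟩
  · rintro ⟨k, -, rfl⟩
    simp [Fin.castLEEmb]

lemma antitone_sum_le {n j : ℕ} (hj : j ≤ n) {splus : Fin n → ℚ} (hanti : Antitone splus)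
    (B : Finset (Fin n)) (hB : B.card = j) :
    ∑ i ∈ B, splus i ≤ ∑ i ∈ univ.filter (fun i : Fin n => (i : ℕ) < j), splus i := by
  have hBmap : B = (univ : Finset (Fin j)).map (B.orderEmbOfFin hB).toEmbedding := by
    ext i
    simp only [Finset.mem_map, mem_univ, true_and]
    constructor
    · intro h
      have : i ∈ Set.range (B.orderEmbOfFin hB) := by
        rw [Finset.range_orderEmbOfFin]; exact h
      obtain ⟨k, hk⟩ := this
      exact ⟨k, hk⟩
    · rintro ⟨k, rfl⟩
      have : (B.orderEmbOfFin hB) k ∈ Set.range (B.orderEmbOfFin hB) := ⟨k, rfl⟩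
      rw [Finset.range_orderEmbOfFin] at this
      exact this
  rw [hBmap, filter_lt_eq_map hj, Finset.sum_map, Finset.sum_map]
  apply Finset.sum_le_sum
  intro k _
  apply hanti
  rw [Fin.le_def]
  exact fin_strictMono_le (B.orderEmbOfFin hB).strictMono k

lemma sum_le_psum {n : ℕ} {s splus : Fin n → ℚ} (h : IsConcaveRearr s splus)
    {j : ℕ} (hj : j ≤ n) (A : Finset (Fin n)) (hA : A.card = j) :
    ∑ i ∈ A, s i ≤ psum splus j := by
  obtain ⟨⟨σ, hσ⟩, hanti⟩ := h
  subst hσ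
  rw [psum_eq_filter]
  have h1 : ∑ i ∈ A.image σ.symm, (s ∘ σ) i = ∑ i ∈ A, s i := by
    rw [Finset.sum_image (fun a _ b _ h => σ.symm.injective h)]
    simp
  have h2 : (A.image σ.symm).card = j := by
    rw [Finset.card_image_of_injective _ σ.symm.injective, hA]
  calc ∑ i ∈ A, s i = ∑ i ∈ A.image σ.symm, (s ∘ σ) i := h1.symm
    _ ≤ _ := antitone_sum_le hj hanti _ h2

lemma append_add {m n : ℕ} (p p' : Fin m → ℚ) (q q' : Fin n → ℚ) :
    Fin.append (p + p') (q + q') = Fin.append p q + Fin.append p' q' := by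
  funext i
  cases i using Fin.addCases with
  | left i => simp [Fin.append_left]
  | right i => simp [Fin.append_right]

lemma psum_add {n : ℕ} (u v : Fin n → ℚ) (j : ℕ) :
    psum (u + v) j = psum u j + psum v j := by
  unfold psum
  rw [← Finset.sum_add_distrib]
  apply Finset.sum_congr rfl
  intro i _
  split <;> simp

lemma sum_rearr {n : ℕ} {s splus : Fin n → ℚ} (h : IsConcaveRearr s splus) :
    ∑ i, splus i = ∑ i, s i := by
  obtain ⟨⟨σ, hσ⟩, -⟩ := h
  subst hσ
  exact Equiv.sum_comp σ s

/-- The direct sum of the slopewise sums is dominated (in the Bruhat order) by the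
slopewise sum of the direct sums. -/
theorem dsum_add_bruhatGE {m n : ℕ} (p p' : Fin m → ℚ) (q q' : Fin n → ℚ)
    (u v w : Fin (m + n) → ℚ)
    (hu : IsDSum p q u) (hv : IsDSum p' q' v)
    (hw : IsDSum (p + p') (q + q') w) :
    BruhatGE (u + v) w := by
  constructor
  · intro j hj1 hjn
    obtain ⟨⟨σ, hσ⟩, -⟩ := hw
    -- psum w j as a sum over a set T of cardinality j of the appended sum
    set F := univ.filter (fun i : Fin (m + n) => (i : ℕ) < j) with hF
    set T := F.image σ with hT
    have hFcard : F.card = j := by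
      rw [hF, filter_lt_eq_map hjn, Finset.card_map, Finset.card_univ, Fintype.card_fin]
    have hTcard : T.card = j := by
      rw [hT, Finset.card_image_of_injective _ σ.injective, hFcard]
    have hw_eq : psum w j = ∑ i ∈ T, Fin.append (p + p') (q + q') i := by
      rw [psum_eq_filter, hσ, hT, Finset.sum_image (fun a _ b _ h => σ.injective h)]
      rfl
    rw [hw_eq, append_add, psum_add]
    have h1 : ∑ i ∈ T, (Fin.append p q + Fin.append p' q') i
        = ∑ i ∈ T, Fin.append p q i + ∑ i ∈ T, Fin.append p' q' i := by
      rw [← Finset.sum_add_distrib]; rfl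
    rw [h1]
    exact add_le_add (sum_le_psum hu hjn T hTcard) (sum_le_psum hv hjn T hTcard)
  · have hsw : ∑ i, w i = ∑ i, Fin.append (p + p') (q + q') i := sum_rearr hw
    have hsu : ∑ i, u i = ∑ i, Fin.append p q i := sum_rearr hu
    have hsv : ∑ i, v i = ∑ i, Fin.append p' q' i := sum_rearr hv
    have : ∑ i, (u + v) i = ∑ i, u i + ∑ i, v i := by
      rw [← Finset.sum_add_distrib]; rfl
    rw [hsw, append_add, this, hsu, hsv]
    simp only [Pi.add_apply]
    rw [Finset.sum_add_distrib]
end
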